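/- arXiv:1703.10582 — 2 statements merged into one kernel-verified Lean document; each statement's English description precedes it below -/
import Mathlib

section
/- Let λ : ℕ≥1 → ℝ satisfy the Hecke relations together with Deligne's bound |λ(p)| ≤ 2 at every prime p, and let x ≥ 2 be a real number such that λ(n) ≥ 0 for every integer 1 ≤ n ≤ x. Then Σ_{n ≤ x} λ(n) ≥ Σ_{n ≤ x} h_x(n). -/
/-!
For `n ≤ x` one even has `h_x(n) ≤ λ(n)` termwise. Write `λ(p) = 2 cos θ` with `0 ≤ θ ≤ π`.
The Hecke relations make `λ(p^k)` the Chebyshev value `sin((k+1)θ) / sin θ`, so nonnegativity of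
`λ(p^k)` for all `p^k ≤ x`, i.e. for `k ≤ m = ⌊log x / log p⌋`, forces `θ ≤ π/(m+1)`, that is
`λ(p) ≥ 2 cos(π/(m+1)) = h_x(p) ≥ 0`. Multiplicativity of both sides on squarefree `n` concludes,
and `h_x(n) = 0 ≤ λ(n)` for the other `n`.
-/

open Finset

/-- `λ` satisfies the Hecke relations: `λ(1) = 1` and
`λ(m)λ(n) = ∑_{d | gcd(m,n)} λ(mn/d²)` for all positive integers `m, n`. -/
def HeckeRelations (lam : ℕ → ℝ) : Prop :=
  lam 1 = 1 ∧
    ∀ m n : ℕ, 0 < m → 0 < n →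
      lam m * lam n = ∑ d ∈ (Nat.gcd m n).divisors, lam (m * n / d ^ 2)

/-- `α(0) = 2` and `α(t) = 2 cos(π/(m+1))` for `1/(m+1) < t ≤ 1/m`, `m ∈ ℕ≥1`.
For `0 < t ≤ 1` one has `1/(m+1) < t ≤ 1/m` exactly when `⌊1/t⌋ = m`. -/
noncomputable def alphaFn (t : ℝ) : ℝ :=
  if t ≤ 0 then 2 else 2 * Real.cos (Real.pi / (⌊1 / t⌋₊ + 1))

/-- The multiplicative function `h_x`, supported on squarefree integers, with
`h_x(p) = α(log p / log x)` for primes `p ≤ x` and `h_x(p) = 0` for primes `p > x`. -/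
noncomputable def hx (x : ℝ) (n : ℕ) : ℝ :=
  if Squarefree n then
    ∏ p ∈ n.primeFactors,
      (if (p : ℝ) ≤ x then alphaFn (Real.log p / Real.log x) else 0)
  else 0

open Real Polynomial

lemma le_pi_div_of_forall_sin_nonneg {θ : ℝ} (hθ₀ : 0 < θ) (hθπ : θ < π) {m : ℕ}
    (hsin : ∀ k ≤ m, 0 ≤ sin ((k + 1) * θ)) : θ ≤ π / (m + 1) := by
  by_contra! hlt
  -- `(j + 1) θ`, the first multiple of `θ` beyond `π`, lies in `(π, 2π)`.
  set j := ⌊π / θ⌋₊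
  have hjm : j ≤ m := by
    rw [← Nat.lt_succ_iff, Nat.floor_lt (by positivity), div_lt_iff₀ hθ₀]
    push_cast
    rwa [div_lt_iff₀ (by positivity), mul_comm] at hlt
  have hlower : π < (j + 1) * θ := (div_lt_iff₀ hθ₀).mp (Nat.lt_floor_add_one _)
  have hupper : j * θ ≤ π := (le_div_iff₀ hθ₀).mp (Nat.floor_le (by positivity))
  have hneg : sin ((j + 1) * θ) < 0 := by
    rw [← neg_pos, ← sin_sub_pi]
    exact sin_pos_of_pos_of_lt_pi (by linarith) (by linarith)
  exact hneg.not_ge (hsin j hjm)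

lemma alphaFn_nonneg {t : ℝ} (ht : t ≤ 1) : 0 ≤ alphaFn t := by
  unfold alphaFn
  split_ifs with ht₀
  · norm_num
  have hfloor : (1 : ℝ) ≤ ⌊1 / t⌋₊ := by
    exact_mod_cast Nat.le_floor (by rw [Nat.cast_one, le_div_iff₀ (by linarith)]; linarith)
  have hangle : π / (⌊1 / t⌋₊ + 1) ≤ π / 2 :=
    div_le_div_of_nonneg_left pi_pos.le two_pos (by linarith)
  have hangle₀ : 0 ≤ π / (⌊1 / t⌋₊ + 1) := by positivity
  exact mul_nonneg two_pos.le (cos_nonneg_of_neg_pi_div_two_le_of_le (by linarith) hangle)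

lemma alphaFn_log_div_log {p x : ℝ} (hp : 1 < p) (hx : 1 < x) :
    alphaFn (log p / log x) = 2 * cos (π / (⌊log x / log p⌋₊ + 1)) := by
  rw [alphaFn, if_neg (div_pos (log_pos hp) (log_pos hx)).not_ge, one_div_div]

lemma pow_le_of_le_floor_log_div_log {p x : ℝ} (hp : 1 < p) (hx : 1 ≤ x) {k : ℕ}
    (hk : k ≤ ⌊log x / log p⌋₊) : p ^ k ≤ x := by
  rw [Nat.le_floor_iff (div_nonneg (log_nonneg hx) (log_pos hp).le), le_div_iff₀ (log_pos hp)]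
    at hk
  exact (pow_le_iff_le_log (by linarith) (by linarith)).mpr hk

namespace HeckeRelations

variable {lam : ℕ → ℝ}

lemma map_mul_of_coprime (h : HeckeRelations lam) {m n : ℕ} (hm : 0 < m) (hn : 0 < n)
    (hmn : m.Coprime n) : lam (m * n) = lam m * lam n := by
  simp [h.2 m n hm hn, hmn]

lemma map_prod_of_prime (h : HeckeRelations lam) {s : Finset ℕ} (hs : ∀ p ∈ s, p.Prime) :
    lam (∏ p ∈ s, p) = ∏ p ∈ s, lam p := by
  induction s using Finset.induction with
  | empty => simpa using h.1
  | @insert a s ha ih =>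
    rw [Finset.forall_mem_insert] at hs
    have hcop : a.Coprime (∏ p ∈ s, p) := Nat.Coprime.prod_right fun p hp =>
      (Nat.coprime_primes hs.1 (hs.2 p hp)).mpr (ne_of_mem_of_not_mem hp ha).symm
    rw [prod_insert ha, prod_insert ha, ← ih hs.2,
      h.map_mul_of_coprime hs.1.pos (prod_pos fun p hp => (hs.2 p hp).pos) hcop]

lemma map_of_squarefree (h : HeckeRelations lam) {n : ℕ} (hn : Squarefree n) :
    lam n = ∏ p ∈ n.primeFactors, lam p := by
  conv_lhs => rw [← Nat.prod_primeFactors_of_squarefree hn]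
  exact h.map_prod_of_prime fun p hp => Nat.prime_of_mem_primeFactors hp

lemma map_prime_pow_add_two (h : HeckeRelations lam) {p : ℕ} (hp : p.Prime) (k : ℕ) :
    lam (p ^ (k + 2)) = lam p * lam (p ^ (k + 1)) - lam (p ^ k) := by
  have hgcd : p.gcd (p ^ (k + 1)) = p := Nat.gcd_eq_left (dvd_pow_self p k.succ_ne_zero)
  have hdiv : p * p ^ (k + 1) / p ^ 2 = p ^ k := by
    rw [← pow_succ', Nat.pow_div (by omega) hp.pos]; rfl
  rw [h.2 p _ hp.pos (pow_pos hp.pos _), hgcd, hp.divisors, sum_pair hp.one_lt.ne, hdiv,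
    one_pow, Nat.div_one, ← pow_succ']
  ring

lemma map_prime_pow_eq_eval_S (h : HeckeRelations lam) {p : ℕ} (hp : p.Prime) (k : ℕ) :
    lam (p ^ k) = (Chebyshev.S ℝ k).eval (lam p) := by
  induction k using Nat.twoStepInduction with
  | zero => simp [h.1]
  | one => simp
  | more k ih₀ ih₁ =>
    rw [h.map_prime_pow_add_two hp, ih₀, ih₁]
    push_cast
    simp [Chebyshev.S_add_two]

lemma two_mul_cos_pi_div_le (h : HeckeRelations lam) {p : ℕ} (hp : p.Prime)
    (hdel : |lam p| ≤ 2) {m : ℕ} (hnonneg : ∀ k ≤ m, 0 ≤ lam (p ^ k)) :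
    2 * cos (π / (m + 1)) ≤ lam p := by
  rcases Nat.eq_zero_or_pos m with rfl | hm
  · simpa using (abs_le.mp hdel).1
  obtain ⟨θ, hθ, hθ₀, hθπ⟩ : ∃ θ, lam p = 2 * cos θ ∧ 0 ≤ θ ∧ θ ≤ π :=
    ⟨arccos (lam p / 2), by rw [cos_arccos] <;> linarith [abs_le.mp hdel], arccos_nonneg _,
      arccos_le_pi _⟩
  suffices θ ≤ π / (m + 1) by
    rw [hθ]
    gcongr
    exact cos_le_cos_of_nonneg_of_le_pi hθ₀ (div_le_self pi_pos.le (by simp)) this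
  rcases hθ₀.eq_or_lt with rfl | hθ₀
  · positivity
  have hθπ : θ < π := by
    refine hθπ.lt_of_ne fun hπ => ?_
    have hp₀ := hnonneg 1 hm
    rw [pow_one, hθ, hπ, cos_pi] at hp₀
    linarith
  apply le_pi_div_of_forall_sin_nonneg hθ₀ hθπ
  intro k hk
  have hsin := Chebyshev.S_two_mul_real_cos θ k
  rw [← hθ, ← h.map_prime_pow_eq_eval_S hp] at hsin
  push_cast at hsin
  rw [← hsin]
  exact mul_nonneg (hnonneg k hk) (sin_nonneg_of_nonneg_of_le_pi hθ₀.le hθπ.le)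

lemma alphaFn_le (h : HeckeRelations lam) {p : ℕ} (hp : p.Prime)
    (hdel : |lam p| ≤ 2) {x : ℝ} (hx : 1 < x)
    (hnonneg : ∀ k : ℕ, (p : ℝ) ^ k ≤ x → 0 ≤ lam (p ^ k)) :
    alphaFn (log p / log x) ≤ lam p := by
  have hp₁ : (1 : ℝ) < p := by exact_mod_cast hp.one_lt
  rw [alphaFn_log_div_log hp₁ hx]
  exact h.two_mul_cos_pi_div_le hp hdel fun k hk =>
    hnonneg k (pow_le_of_le_floor_log_div_log hp₁ hx.le hk)

end HeckeRelations

theorem stmt_1 (lam : ℕ → ℝ) (hHecke : HeckeRelations lam)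
    (hDeligne : ∀ p : ℕ, p.Prime → |lam p| ≤ 2)
    (x : ℝ) (hx2 : 2 ≤ x)
    (hpos : ∀ n : ℕ, 1 ≤ n → (n : ℝ) ≤ x → 0 ≤ lam n) :
    ∑ n ∈ Finset.Icc 1 ⌊x⌋₊, hx x n ≤ ∑ n ∈ Finset.Icc 1 ⌊x⌋₊, lam n := by
  have hx₁ : (1 : ℝ) < x := by linarith
  refine sum_le_sum fun n hn => ?_
  obtain ⟨hn₁, hnx⟩ : 1 ≤ n ∧ (n : ℝ) ≤ x := by
    rwa [mem_Icc, Nat.le_floor_iff (by linarith)] at hn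
  unfold hx
  split_ifs with hsq
  swap
  · exact hpos n hn₁ hnx
  have hpx : ∀ p ∈ n.primeFactors, (p : ℝ) ≤ x := fun p hp =>
    le_trans (by exact_mod_cast Nat.le_of_mem_primeFactors hp) hnx
  rw [hHecke.map_of_squarefree hsq, prod_congr rfl fun p hp => if_pos (hpx p hp)]
  refine prod_le_prod (fun p hp => alphaFn_nonneg ?_) fun p hp => ?_
  · have hp₁ : (1 : ℝ) < p := by exact_mod_cast (Nat.prime_of_mem_primeFactors hp).one_lt
    exact div_le_one_of_le₀ (log_le_log (by linarith) (hpx p hp)) (log_nonneg hx₁.le)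
  have hprime := Nat.prime_of_mem_primeFactors hp
  exact hHecke.alphaFn_le hprime (hDeligne p hprime) hx₁ fun k hk =>
    hpos _ (Nat.one_le_pow _ _ hprime.pos) (by exact_mod_cast hk)
end

section
/- Let m ≥ 1 be an integer and let θ ∈ [0, π]. If U_j(cos θ) ≥ 0 for every integer 1 ≤ j ≤ m, where U_j denotes the j-th Chebyshev polynomial of the second kind, then θ ≤ π/(m+1); in particular 2cos θ ≥ 2cos(π/(m+1)). -/
open Polynomial Real

theorem stmt_2 (m : ℕ) (hm : 1 ≤ m) (θ : ℝ) (hθ : θ ∈ Set.Icc 0 Real.pi)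
    (hU : ∀ j : ℕ, 1 ≤ j → j ≤ m →
      0 ≤ (Polynomial.Chebyshev.U ℝ (j : ℤ)).eval (Real.cos θ)) :
    θ ≤ Real.pi / (m + 1) ∧ 2 * Real.cos (Real.pi / (m + 1)) ≤ 2 * Real.cos θ := by
  obtain ⟨h0, hπ⟩ := hθ
  have hm1 : (0:ℝ) < (m:ℝ) + 1 := by positivity
  have hdivpos : 0 < Real.pi / (m + 1) := div_pos Real.pi_pos hm1
  have hdivle : Real.pi / (m + 1) ≤ Real.pi := by
    rw [div_le_iff₀ hm1]
    nlinarith [Real.pi_pos]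
  have hmain : θ ≤ Real.pi / (m + 1) := by
    by_contra hlt
    push_neg at hlt
    have hθpos : 0 < θ := lt_trans hdivpos hlt
    -- θ < π case split
    rcases lt_or_eq_of_le hπ with hθπ | hθπ
    · -- θ < π
      have hsin : 0 < Real.sin θ := Real.sin_pos_of_pos_of_lt_pi hθpos hθπ
      set j : ℕ := ⌊Real.pi / θ⌋₊ with hj
      have hj1 : 1 ≤ j := by
        apply Nat.le_floor
        rw [le_div_iff₀ hθpos]
        simpa using hπ
      have hjm : j ≤ m := by
        have h1 : Real.pi / θ < ((m + 1 : ℕ) : ℝ) := by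
          push_cast
          rw [div_lt_iff₀ hθpos]
          calc Real.pi = (Real.pi / (m+1)) * (m+1) := by field_simp
            _ < ((m:ℝ)+1) * θ := by rw [mul_comm]; exact (mul_lt_mul_iff_right₀ hm1).2 hlt
        have h2 := (Nat.floor_lt (by positivity : (0:ℝ) ≤ Real.pi / θ)).2 h1
        omega
      have hjθ : (j:ℝ) * θ ≤ Real.pi := by
        have := Nat.floor_le (by positivity : (0:ℝ) ≤ Real.pi / θ)
        calc (j:ℝ) * θ ≤ (Real.pi / θ) * θ := by
              exact mul_le_mul_of_nonneg_right this (le_of_lt hθpos)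
          _ = Real.pi := by field_simp
      have hj1θ : Real.pi < ((j:ℝ) + 1) * θ := by
        have := Nat.lt_floor_add_one (Real.pi / θ)
        calc Real.pi = (Real.pi / θ) * θ := by field_simp
          _ < ((j:ℝ) + 1) * θ := by
              exact mul_lt_mul_of_pos_right this hθpos
      have hj1θ2 : ((j:ℝ) + 1) * θ < 2 * Real.pi := by
        nlinarith
      have hsinneg : Real.sin (((j:ℝ) + 1) * θ) < 0 := by
        have : Real.sin (((j:ℝ) + 1) * θ - Real.pi + Real.pi) = - Real.sin (((j:ℝ)+1)*θ - Real.pi) :=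
          Real.sin_add_pi _
        rw [sub_add_cancel] at this
        rw [this]
        have : 0 < Real.sin (((j:ℝ)+1)*θ - Real.pi) :=
          Real.sin_pos_of_pos_of_lt_pi (by linarith) (by linarith)
        linarith
      have hUj := hU j hj1 hjm
      have key : (Polynomial.Chebyshev.U ℝ (j:ℤ)).eval (Real.cos θ) * Real.sin θ
          = Real.sin (((j:ℤ) + 1) * θ) := Polynomial.Chebyshev.U_real_cos θ (j:ℤ)
      have : 0 ≤ Real.sin (((j:ℝ) + 1) * θ) := by
        have := mul_nonneg hUj (le_of_lt hsin)
        rw [key] at this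
        push_cast at this ⊢
        exact this
      linarith
    · -- θ = π : use j = 1
      have hUj := hU 1 le_rfl hm
      have key : (Polynomial.Chebyshev.U ℝ (1:ℤ)).eval (Real.cos θ) = 2 * Real.cos θ := by
        simp [Polynomial.Chebyshev.U_one]
      push_cast at hUj; rw [key] at hUj; rw [hθπ, Real.cos_pi] at hUj
      linarith
  refine ⟨hmain, ?_⟩
  have := Real.cos_le_cos_of_nonneg_of_le_pi h0 hdivle hmain
  linarith
end
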